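/- arXiv:2105.07055 — 3 statements merged into one kernel-verified Lean document; each statement's English description precedes it below -/
import Mathlib

section
/- Let X and Y be independent Gamma(m, m) random variables with integer shape parameter m ≥ 1, and let a, b > 0 and I ≥ 0 be constants. Then the CDF of T₁ = aX/(bY + I) is F(τ) = 1 − Σ_{i=0}^{m−1} Σ_{k=0}^{i} [(k+m−1)! / (k!(m−1)!(i−k)!)] · aᵐ(bτ)ᵏ/(a+bτ)^{m+k} · (mτI/a)^{i−k} · e^{−mτI/a} for τ ≥ 0. -/
open MeasureTheory ProbabilityTheory Real

/-!
Conditionally on `Y = y`, the event `T₁ > τ` is `X > τ (b y + I) / a`, and for integer shape the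
Gamma(m, m) tail at `t` is the Poisson sum `∑_{i<m} (m t)^i e^{-m t} / i!` (its derivative
telescopes to minus the density). With `m t = c y + d`, expanding `(c y + d)^i` binomially reduces
the expectation over `Y` to the Gamma moments `E[Y^k e^{-c Y}] = m^m Γ(m+k) / (Γ(m) (m+c)^{m+k})`.
-/

open Set Filter Topology
open scoped Nat

noncomputable def erlangTail (n : ℕ) (x : ℝ) : ℝ :=
  ∑ i ∈ Finset.range n, x ^ i * exp (-x) / i !

lemma hasDerivAt_erlangTail_succ (n : ℕ) (x : ℝ) :
    HasDerivAt (erlangTail (n + 1)) (-(x ^ n * exp (-x) / n !)) x := by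
  induction n with
  | zero =>
    have hone : erlangTail 1 = fun x => exp (-x) := funext fun x => by simp [erlangTail]
    simpa [hone] using (hasDerivAt_neg x).exp
  | succ n ih =>
    have hterm : HasDerivAt (fun x => x ^ (n + 1) * exp (-x) / (n + 1)!)
        (x ^ n * exp (-x) / (n !) - x ^ (n + 1) * exp (-x) / (n + 1)!) x := by
      refine (((hasDerivAt_pow (n + 1) x).mul (hasDerivAt_neg x).exp).div_const
        ((n + 1)! : ℝ)).congr_deriv ?_
      rw [Nat.factorial_succ]
      push_cast
      field_simp
      ring
    have hsplit : erlangTail (n + 2) =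
        fun x => erlangTail (n + 1) x + x ^ (n + 1) * exp (-x) / (n + 1)! :=
      funext fun x => Finset.sum_range_succ _ _
    rw [hsplit]
    exact (ih.add hterm).congr_deriv (by ring)

lemma tendsto_erlangTail_atTop (n : ℕ) : Tendsto (erlangTail n) atTop (𝓝 0) := by
  have hterm (i : ℕ) : Tendsto (fun x => x ^ i * exp (-x) / i !) atTop (𝓝 0) := by
    simpa using (tendsto_pow_mul_exp_neg_atTop_nhds_zero i).div_const (i ! : ℝ)
  have hsum := tendsto_finsetSum (Finset.range n) fun i _ => hterm i
  rwa [Finset.sum_const_zero] at hsum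

lemma gammaPDFReal_natCast_succ (n : ℕ) (r : ℝ) {x : ℝ} (hx : 0 ≤ x) :
    gammaPDFReal (n + 1 : ℕ) r x = r ^ (n + 1) * x ^ n * exp (-(r * x)) / n ! := by
  rw [gammaPDFReal, if_pos hx, Nat.cast_succ, Gamma_nat_eq_factorial, add_sub_cancel_right,
    rpow_natCast, ← Nat.cast_add_one, rpow_natCast]
  ring

lemma gammaMeasure_Ioi_natCast_succ (n : ℕ) {r t : ℝ} (hr : 0 < r) (ht : 0 ≤ t) :
    gammaMeasure (n + 1 : ℕ) r (Ioi t) = ENNReal.ofReal (erlangTail (n + 1) (r * t)) := by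
  have hderiv : ∀ x ∈ Ici t, HasDerivAt (fun x => -erlangTail (n + 1) (r * x))
      (gammaPDFReal (n + 1 : ℕ) r x) x := by
    intro x hx
    rw [gammaPDFReal_natCast_succ n r (ht.trans hx)]
    refine ((hasDerivAt_erlangTail_succ n (r * x)).comp x
      ((hasDerivAt_id x).const_mul r)).neg.congr_deriv ?_
    ring
  have hnonneg : ∀ x ∈ Ioi t, 0 ≤ gammaPDFReal (n + 1 : ℕ) r x :=
    fun x _ => gammaPDFReal_nonneg (by positivity) hr x
  have hlim : Tendsto (fun x => -erlangTail (n + 1) (r * x)) atTop (𝓝 0) := by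
    simpa using ((tendsto_erlangTail_atTop (n + 1)).comp (tendsto_id.const_mul_atTop hr)).neg
  rw [gammaMeasure, withDensity_apply _ measurableSet_Ioi]
  unfold gammaPDF
  rw [← ofReal_integral_eq_lintegral_ofReal
      (integrableOn_Ioi_deriv_of_nonneg' hderiv hnonneg hlim)
      (ae_of_all _ (gammaPDFReal_nonneg (by positivity) hr)),
    integral_Ioi_of_hasDerivAt_of_nonneg' hderiv hnonneg hlim, zero_sub, neg_neg]

lemma gammaMeasure_Iic_zero (a r : ℝ) : gammaMeasure a r (Iic 0) = 0 := by
  rw [gammaMeasure, withDensity_apply _ measurableSet_Iic, ← setLIntegral_congr Iio_ae_eq_Iic,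
    lintegral_gammaPDF_of_nonpos le_rfl]

lemma ae_pos_gammaMeasure (a r : ℝ) : ∀ᵐ y ∂gammaMeasure a r, 0 < y :=
  ae_iff.mpr (measure_mono_null (fun _ hy => not_lt.mp hy) (gammaMeasure_Iic_zero a r))

lemma lintegral_pow_mul_exp_neg_mul_gammaMeasure {a r c : ℝ} (ha : 0 < a) (hr : 0 < r)
    (hc : 0 ≤ c) (k : ℕ) :
    ∫⁻ y, ENNReal.ofReal (y ^ k * exp (-(c * y))) ∂gammaMeasure a r =
      ENNReal.ofReal (r ^ a * Gamma (a + k) / (Gamma a * (r + c) ^ (a + k))) := by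
  have hrc : 0 < r + c := by positivity
  have hak : 0 < a + k := by positivity
  have hdensity : ∀ y ∈ Ioi (0 : ℝ),
      gammaPDF a r y * ENNReal.ofReal (y ^ k * exp (-(c * y))) =
        ENNReal.ofReal (r ^ a / Gamma a * (y ^ (a + k - 1) * exp (-((r + c) * y)))) := by
    intro y (hy : 0 < y)
    rw [gammaPDF_of_nonneg hy.le, ← ENNReal.ofReal_mul (by positivity)]
    congr 1
    rw [show a + k - 1 = (a - 1) + k by ring, rpow_add hy, rpow_natCast,
      show -((r + c) * y) = -(r * y) + -(c * y) by ring, exp_add]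
    ring
  have hint : IntegrableOn (fun y => y ^ (a + k - 1) * exp (-((r + c) * y))) (Ioi 0) := by
    simpa only [rpow_one, neg_mul] using
      integrableOn_rpow_mul_exp_neg_mul_rpow (s := a + k - 1) (p := 1) (by linarith) one_pos hrc
  have hsupport :
      Function.support (fun y => gammaPDF a r y * ENNReal.ofReal (y ^ k * exp (-(c * y)))) ⊆
        Ici 0 := by
    intro y hy
    exact not_lt.mp fun (hneg : y < 0) => hy (by simp only [gammaPDF_of_neg hneg, zero_mul])
  rw [gammaMeasure, lintegral_withDensity_eq_lintegral_mul _
      (f := gammaPDF a r) ((measurable_gammaPDFReal a r).ennreal_ofReal) (by fun_prop)]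
  simp only [Pi.mul_apply]
  rw [← setLIntegral_eq_of_support_subset hsupport, ← setLIntegral_congr Ioi_ae_eq_Ici,
    setLIntegral_congr_fun measurableSet_Ioi hdensity,
    ← ofReal_integral_eq_lintegral_ofReal (hint.const_mul _)
      ((ae_restrict_iff' measurableSet_Ioi).mpr (ae_of_all _ fun y (hy : 0 < y) => by positivity)),
    integral_const_mul, integral_rpow_mul_exp_neg_mul_Ioi hak hrc, one_div, inv_rpow hrc.le]
  field_simp

lemma erlangTail_mul_add (n : ℕ) (c y d : ℝ) :
    erlangTail n (c * y + d) = ∑ i ∈ Finset.range n, ∑ k ∈ Finset.range (i + 1),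
      c ^ k / k ! * (d ^ (i - k) * exp (-d) / (i - k)!) * (y ^ k * exp (-(c * y))) := by
  refine Finset.sum_congr rfl fun i _ => ?_
  rw [add_pow, Finset.sum_mul, Finset.sum_div]
  refine Finset.sum_congr rfl fun k hk => ?_
  rw [Nat.cast_choose ℝ (Nat.lt_succ_iff.mp (Finset.mem_range.mp hk)), neg_add, exp_add]
  field_simp
  ring

lemma lintegral_erlangTail_mul_add_gammaMeasure {a r c d : ℝ} (ha : 0 < a) (hr : 0 < r)
    (hc : 0 ≤ c) (hd : 0 ≤ d) (n : ℕ) :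
    ∫⁻ y, ENNReal.ofReal (erlangTail n (c * y + d)) ∂gammaMeasure a r =
      ENNReal.ofReal (∑ i ∈ Finset.range n, ∑ k ∈ Finset.range (i + 1),
        c ^ k / k ! * (d ^ (i - k) * exp (-d) / (i - k)!) *
          (r ^ a * Gamma (a + k) / (Gamma a * (r + c) ^ (a + k)))) := by
  have hcoef (i k : ℕ) : 0 ≤ c ^ k / k ! * (d ^ (i - k) * exp (-d) / (i - k)!) := by positivity
  calc ∫⁻ y, ENNReal.ofReal (erlangTail n (c * y + d)) ∂gammaMeasure a r
      = ∫⁻ y, ∑ i ∈ Finset.range n, ∑ k ∈ Finset.range (i + 1),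
          ENNReal.ofReal (c ^ k / k ! * (d ^ (i - k) * exp (-d) / (i - k)!)) *
            ENNReal.ofReal (y ^ k * exp (-(c * y))) ∂gammaMeasure a r := by
        refine lintegral_congr_ae ((ae_pos_gammaMeasure a r).mono fun y (hy : 0 < y) => ?_)
        dsimp only
        rw [erlangTail_mul_add, ENNReal.ofReal_sum_of_nonneg fun i _ =>
          Finset.sum_nonneg fun k _ => by positivity]
        refine Finset.sum_congr rfl fun i _ => ?_
        rw [ENNReal.ofReal_sum_of_nonneg fun k _ => by positivity]
        exact Finset.sum_congr rfl fun k _ => ENNReal.ofReal_mul (hcoef i k)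
    _ = ∑ i ∈ Finset.range n, ∑ k ∈ Finset.range (i + 1),
          ENNReal.ofReal (c ^ k / k ! * (d ^ (i - k) * exp (-d) / (i - k)!)) *
            ENNReal.ofReal (r ^ a * Gamma (a + k) / (Gamma a * (r + c) ^ (a + k))) := by
        rw [lintegral_finsetSum _ fun i _ => by fun_prop]
        refine Finset.sum_congr rfl fun i _ => ?_
        rw [lintegral_finsetSum _ fun k _ => by fun_prop]
        refine Finset.sum_congr rfl fun k _ => ?_
        rw [lintegral_const_mul _ (by fun_prop),
          lintegral_pow_mul_exp_neg_mul_gammaMeasure ha hr hc]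
    _ = _ := by
        rw [ENNReal.ofReal_sum_of_nonneg fun i _ => Finset.sum_nonneg fun k _ => by positivity]
        refine Finset.sum_congr rfl fun i _ => ?_
        rw [ENNReal.ofReal_sum_of_nonneg fun k _ => by positivity]
        exact Finset.sum_congr rfl fun k _ => (ENNReal.ofReal_mul (hcoef i k)).symm

lemma measure_preimage_prodMk_eq_prod_of_indepFun {Ω α β : Type*} [MeasurableSpace Ω]
    [MeasurableSpace α] [MeasurableSpace β] {P : Measure Ω} [IsFiniteMeasure P]
    {X : Ω → α} {Y : Ω → β} (hXY : IndepFun X Y P) (hX : AEMeasurable X P)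
    (hY : AEMeasurable Y P) {s : Set (α × β)} (hs : MeasurableSet s) :
    P ((fun ω => (X ω, Y ω)) ⁻¹' s) = (P.map X).prod (P.map Y) s := by
  rw [← (indepFun_iff_map_prod_eq_prod_map_map hX hY).mp hXY,
    Measure.map_apply_of_aemeasurable (hX.prodMk hY) hs]

lemma gammaMeasure_prod_setOf_lt_ratio (n : ℕ) {r s q a b I τ : ℝ} (hr : 0 < r) (hs : 0 < s)
    (hq : 0 < q) (ha : 0 < a) (hb : 0 < b) (hI : 0 ≤ I) (hτ : 0 ≤ τ) :
    (gammaMeasure (n + 1 : ℕ) r).prod (gammaMeasure s q)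
        {p | τ < a * p.1 / (b * p.2 + I)} =
      ENNReal.ofReal (∑ i ∈ Finset.range (n + 1), ∑ k ∈ Finset.range (i + 1),
        (r * (b * τ / a)) ^ k / k ! *
          ((r * τ * I / a) ^ (i - k) * exp (-(r * τ * I / a)) / (i - k)!) *
          (q ^ s * Gamma (s + k) / (Gamma s * (q + r * (b * τ / a)) ^ (s + k)))) := by
  have hslice : ∀ᵐ y ∂gammaMeasure s q,
      gammaMeasure (n + 1 : ℕ) r ((fun x => (x, y)) ⁻¹' {p | τ < a * p.1 / (b * p.2 + I)}) =
        ENNReal.ofReal (erlangTail (n + 1) (r * (b * τ / a) * y + r * τ * I / a)) := by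
    -- `0 < y` keeps `b * y + I` positive, so the slice is a half-line even when `I = 0`.
    filter_upwards [ae_pos_gammaMeasure s q] with y hy
    have hpre : (fun x => (x, y)) ⁻¹' {p | τ < a * p.1 / (b * p.2 + I)} =
        Ioi ((b * y + I) * τ / a) := by
      ext x
      simp only [mem_preimage, mem_ofPred_eq, mem_Ioi,
        lt_div_iff₀ (by positivity : 0 < b * y + I), div_lt_iff₀ ha]
      constructor <;> intro h <;> linarith
    rw [hpre, gammaMeasure_Ioi_natCast_succ n hr (by positivity)]
    congr 2
    field_simp
  have := isProbabilityMeasure_gammaMeasure (by positivity : (0 : ℝ) < (n + 1 : ℕ)) hr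
  have := isProbabilityMeasure_gammaMeasure hs hq
  rw [Measure.prod_apply_symm (measurableSet_lt measurable_const (by fun_prop)),
    lintegral_congr_ae hslice,
    lintegral_erlangTail_mul_add_gammaMeasure hs hq (by positivity) (by positivity)]

lemma rpow_mul_Gamma_div_rpow_natCast_succ (n k : ℕ) (r s : ℝ) :
    r ^ ((n + 1 : ℕ) : ℝ) * Gamma ((n + 1 : ℕ) + k) /
        (Gamma (n + 1 : ℕ) * s ^ (((n + 1 : ℕ) : ℝ) + k)) =
      (n + k)! / n ! * r ^ (n + 1) / s ^ (n + 1 + k) := by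
  rw [← Nat.cast_add, rpow_natCast, rpow_natCast, show n + 1 + k = (n + k) + 1 by omega,
    Nat.cast_succ, Nat.cast_succ, Gamma_nat_eq_factorial, Gamma_nat_eq_factorial]
  field_simp

/-- CDF of T₁ = aX/(bY+I) for independent Gamma(m,m) X, Y. -/
theorem gamma_T1_cdf
    {Ω : Type*} [MeasurableSpace Ω] (P : Measure Ω) [IsProbabilityMeasure P]
    (X Y : Ω → ℝ) (m : ℕ) (hm : 1 ≤ m) (a b I τ : ℝ)
    (ha : 0 < a) (hb : 0 < b) (hI : 0 ≤ I) (hτ : 0 ≤ τ)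
    (hXY : IndepFun X Y P)
    (hX : Measure.map X P = gammaMeasure (m : ℝ) (m : ℝ))
    (hY : Measure.map Y P = gammaMeasure (m : ℝ) (m : ℝ)) :
    (P {ω | a * X ω / (b * Y ω + I) ≤ τ}).toReal =
      1 - ∑ i ∈ Finset.range m, ∑ k ∈ Finset.range (i + 1),
        ((k + m - 1).factorial : ℝ) /
          (k.factorial * (m - 1).factorial * (i - k).factorial) *
        (a ^ m * (b * τ) ^ k / (a + b * τ) ^ (m + k)) *
        (m * τ * I / a) ^ (i - k) * Real.exp (-(m * τ * I / a)) := by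
  obtain ⟨n, rfl⟩ : ∃ n, m = n + 1 := ⟨m - 1, by omega⟩
  set M : ℝ := ((n + 1 : ℕ) : ℝ)
  have hM : 0 < M := by positivity
  have := isProbabilityMeasure_gammaMeasure hM hM
  have hXm : AEMeasurable X P := .of_map_ne_zero (by rw [hX]; exact IsProbabilityMeasure.ne_zero _)
  have hYm : AEMeasurable Y P := .of_map_ne_zero (by rw [hY]; exact IsProbabilityMeasure.ne_zero _)
  set S := {p : ℝ × ℝ | a * p.1 / (b * p.2 + I) ≤ τ}
  have hS : MeasurableSet S := measurableSet_le (by fun_prop) measurable_const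
  have hSc : Sᶜ = {p | τ < a * p.1 / (b * p.2 + I)} := by ext; simp [S]
  have hlaw := measure_preimage_prodMk_eq_prod_of_indepFun hXY hXm hYm hS.compl
  rw [hX, hY, hSc, gammaMeasure_prod_setOf_lt_ratio n hM hM hM ha hb hI hτ] at hlaw
  change P.real ((fun ω => (X ω, Y ω)) ⁻¹' S) = _
  rw [← compl_compl S, preimage_compl,
    probReal_compl_eq_one_sub₀ ((hXm.prodMk hYm).nullMeasurable hS.compl), measureReal_def,
    hSc, hlaw, ENNReal.toReal_ofReal (by positivity)]
  congr 1
  refine Finset.sum_congr rfl fun i _ => Finset.sum_congr rfl fun k _ => ?_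
  set u := b * τ / a with hu
  have hscale : (M * u) ^ k * M ^ (n + 1) / (M + M * u) ^ (n + 1 + k) =
      a ^ (n + 1) * (b * τ) ^ k / (a + b * τ) ^ (n + 1 + k) := by
    rw [show b * τ = a * u by rw [hu]; field_simp, show M + M * u = M * (1 + u) by ring,
      show a + a * u = a * (1 + u) by ring]
    simp only [mul_pow, pow_add]
    field_simp
  rw [rpow_mul_Gamma_div_rpow_natCast_succ, ← hscale, show k + (n + 1) - 1 = n + k by omega,
    Nat.add_sub_cancel]
  ring
end

section
/- Let X and Y be independent exponential random variables with mean 1, and let a, b > 0, I ≥ 0. For 0 ≤ τ < 1, the CDF of T₂ = max{aX, bY}/(min{aX, bY} + I) equals 1 − [a/(a+bτ)]e^{−τI/a} − [b/(b+aτ)]e^{−τI/b} + [ab(1+τ)(1−τ)/((a+bτ)(b+aτ))] e^{−(1/a + 1/b)·τI/(1−τ)}. -/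
/-!
Write `U = aX` and `V = bY`, independent exponentials of rates `1/a` and `1/b`. Almost surely
`U, V > 0`, and then `T₂ ≤ τ` fails exactly on `A ∪ B` with `A = {τV + τI < U}` and
`B = {τU + τI < V}`. The half-planes `A`, `B` are computed by integrating the exponential tail
of one variable against the law of the other. For `τ < 1`, `A ∩ B` is the cone
`C = {τV < U, τU < V}` translated by `(k, k)` with `k = τI/(1-τ)`, so by memorylessness
`P(A ∩ B) = e^{-(1/a + 1/b) k} P(C)`; and `C` is the intersection of two half-planes through the
origin whose union has full measure.
-/

open MeasureTheory ProbabilityTheory Real Set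

lemma max_div_min_add_le_iff {u v I τ : ℝ} (hu : 0 < u) (hv : 0 < v) (hI : 0 ≤ I) :
    max u v / (min u v + I) ≤ τ ↔ u ≤ τ * v + τ * I ∧ v ≤ τ * u + τ * I := by
  rw [div_le_iff₀ (add_pos_of_pos_of_nonneg (lt_min hu hv) hI)]
  rcases le_total u v with h | h
  · rw [max_eq_right h, min_eq_left h]
    refine ⟨fun hv' => ⟨by nlinarith, by linarith⟩, fun h' => by linarith [h'.2]⟩
  · rw [max_eq_left h, min_eq_right h]
    refine ⟨fun hu' => ⟨by linarith, by nlinarith⟩, fun h' => by linarith [h'.1]⟩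

lemma pos_of_mul_lt_of_mul_lt {x y τ : ℝ} (hτ0 : 0 ≤ τ) (hτ1 : τ < 1) (hx : τ * y < x)
    (hy : τ * x < y) : 0 < x := by
  by_contra! h
  nlinarith [mul_le_mul_of_nonneg_left hy.le hτ0,
    mul_nonneg (sub_nonneg.2 hτ1.le) (neg_nonneg.2 h)]

namespace ProbabilityTheory

variable {r : ℝ}

lemma expMeasure_Iic (hr : 0 < r) (x : ℝ) :
    expMeasure r (Iic x) = ENNReal.ofReal (if 0 ≤ x then 1 - exp (-(r * x)) else 0) := by
  have := isProbabilityMeasure_expMeasure hr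
  rw [← ofReal_cdf, cdf_expMeasure_eq hr]

lemma ae_pos_expMeasure (hr : 0 < r) : ∀ᵐ x ∂expMeasure r, 0 < x := by
  rw [ae_iff]
  simp only [not_lt]
  change expMeasure r (Iic 0) = 0
  simp [expMeasure_Iic hr]

lemma expMeasure_Ioi (hr : 0 < r) {t : ℝ} (ht : 0 ≤ t) :
    expMeasure r (Ioi t) = ENNReal.ofReal (exp (-(r * t))) := by
  have := isProbabilityMeasure_expMeasure hr
  have hexp : exp (-(r * t)) ≤ 1 := exp_le_one_iff.2 (by nlinarith)
  rw [← compl_Iic, prob_compl_eq_one_sub measurableSet_Iic, expMeasure_Iic hr, if_pos ht,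
    ← ENNReal.ofReal_one, ← ENNReal.ofReal_sub _ (by linarith)]
  ring_nf

lemma expMeasure_restrict_Ioi (hr : 0 < r) {t : ℝ} (ht : 0 ≤ t) :
    (expMeasure r).restrict (Ioi t) =
      ENNReal.ofReal (exp (-(r * t))) • (expMeasure r).map (· + t) := by
  have := isProbabilityMeasure_expMeasure hr
  refine Measure.ext_of_Iic _ _ fun x => ?_
  have hIoc := (cdf (expMeasure r)).measure_Ioc t x
  rw [measure_cdf] at hIoc
  rw [Measure.restrict_apply measurableSet_Iic, Iic_inter_Ioi, hIoc, Measure.smul_apply,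
    Measure.map_apply (measurable_add_const t) measurableSet_Iic, preimage_add_const_Iic,
    ← ofReal_cdf, smul_eq_mul, ← ENNReal.ofReal_mul (exp_pos _).le, cdf_expMeasure_eq hr,
    cdf_expMeasure_eq hr, cdf_expMeasure_eq hr, if_pos ht]
  rcases lt_or_ge x t with hxt | htx
  · rw [if_neg (by linarith : ¬ 0 ≤ x - t), mul_zero, ENNReal.ofReal_zero, ENNReal.ofReal_eq_zero]
    have := exp_le_exp.2 (by nlinarith : -(r * t) ≤ -(r * x))
    have := exp_le_one_iff.2 (by nlinarith : -(r * t) ≤ 0)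
    split_ifs <;> linarith
  · rw [if_pos (by linarith), if_pos (by linarith), mul_sub, ← exp_add]
    ring_nf

lemma lintegral_exp_neg_mul_expMeasure {s : ℝ} (hrs : 0 < r + s) :
    ∫⁻ x, ENNReal.ofReal (exp (-(s * x))) ∂expMeasure r = ENNReal.ofReal (r / (r + s)) := by
  have hpdf : ∀ x, exponentialPDF r x * ENNReal.ofReal (exp (-(s * x)))
      = ENNReal.ofReal (r / (r + s)) * exponentialPDF (r + s) x := by
    intro x
    rcases lt_or_ge x 0 with hx | hx
    · simp [exponentialPDF_of_neg hx]
    rw [exponentialPDF_of_nonneg hx, exponentialPDF_of_nonneg hx, mul_comm,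
      ← ENNReal.ofReal_mul (exp_pos _).le, ← ENNReal.ofReal_mul' (by positivity)]
    congr 1
    field_simp
    rw [show -(x * (r + s)) = -(x * r) + -(s * x) by ring, exp_add]
    ring
  have hm : Measurable (exponentialPDF r) := (measurable_exponentialPDFReal r).ennreal_ofReal
  change ∫⁻ x, _ ∂(volume.withDensity (exponentialPDF r)) = _
  rw [lintegral_withDensity_eq_lintegral_mul _ hm (by fun_prop)]
  simp only [Pi.mul_apply, hpdf]
  rw [lintegral_const_mul' _ _ ENNReal.ofReal_ne_top,
    lintegral_exponentialPDF_eq_one hrs, mul_one]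

lemma map_const_mul_expMeasure (hr : 0 < r) {a : ℝ} (ha : 0 < a) :
    (expMeasure r).map (a * ·) = expMeasure (r / a) := by
  have := isProbabilityMeasure_expMeasure hr
  refine Measure.ext_of_Iic _ _ fun x => ?_
  rw [Measure.map_apply (measurable_const_mul a) measurableSet_Iic, preimage_const_mul_Iic₀ x ha,
    expMeasure_Iic hr, expMeasure_Iic (div_pos hr ha)]
  congr 1
  simp only [div_nonneg_iff, ha.le, ha.not_ge, and_true, and_false, or_false]
  rw [mul_div_assoc', div_mul_eq_mul_div]

lemma aemeasurable_of_map_eq_expMeasure {Ω : Type*} [MeasurableSpace Ω] {P : Measure Ω}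
    {X : Ω → ℝ} (hr : 0 < r) (hX : P.map X = expMeasure r) : AEMeasurable X P :=
  .of_map_ne_zero (hX ▸ (isProbabilityMeasure_expMeasure hr).ne_zero)

lemma map_const_mul_eq_expMeasure {Ω : Type*} [MeasurableSpace Ω] {P : Measure Ω} {X : Ω → ℝ}
    {a : ℝ} (hr : 0 < r) (ha : 0 < a) (hX : P.map X = expMeasure r) :
    P.map (fun ω => a * X ω) = expMeasure (r / a) := by
  rw [← map_const_mul_expMeasure hr ha, ← hX, AEMeasurable.map_map_of_aemeasurable
    (measurable_const_mul a).aemeasurable (aemeasurable_of_map_eq_expMeasure hr hX)]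
  rfl

section Product

variable {r₁ r₂ : ℝ}

lemma ae_pos_expMeasure_prod (hr₁ : 0 < r₁) (hr₂ : 0 < r₂) :
    ∀ᵐ p ∂(expMeasure r₁).prod (expMeasure r₂), 0 < p.1 ∧ 0 < p.2 :=
  (Measure.quasiMeasurePreserving_fst.ae (ae_pos_expMeasure hr₁)).and
    (Measure.quasiMeasurePreserving_snd.ae (ae_pos_expMeasure hr₂))

lemma measureReal_expMeasure_prod_setOf_lt (hr₁ : 0 < r₁) (hr₂ : 0 < r₂) {s c : ℝ}
    (hs : 0 ≤ s) (hc : 0 ≤ c) :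
    ((expMeasure r₁).prod (expMeasure r₂)).real {p | s * p.2 + c < p.1} =
      exp (-(r₁ * c)) * (r₂ / (r₂ + r₁ * s)) := by
  have := isProbabilityMeasure_expMeasure hr₁
  have := isProbabilityMeasure_expMeasure hr₂
  have hslice : ∀ᵐ y ∂expMeasure r₂,
      expMeasure r₁ ((·, y) ⁻¹' {p : ℝ × ℝ | s * p.2 + c < p.1}) =
        ENNReal.ofReal (exp (-(r₁ * c))) * ENNReal.ofReal (exp (-(r₁ * s * y))) := by
    filter_upwards [ae_pos_expMeasure hr₂] with y hy
    rw [show (·, y) ⁻¹' {p : ℝ × ℝ | s * p.2 + c < p.1} = Ioi (s * y + c) from rfl,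
      expMeasure_Ioi hr₁ (by positivity), ← ENNReal.ofReal_mul (exp_pos _).le, ← exp_add]
    ring_nf
  rw [measureReal_def, Measure.prod_apply_symm (measurableSet_lt (by fun_prop) (by fun_prop)),
    lintegral_congr_ae hslice, lintegral_const_mul' _ _ ENNReal.ofReal_ne_top,
    lintegral_exp_neg_mul_expMeasure (by positivity), ← ENNReal.ofReal_mul (exp_pos _).le,
    ENNReal.toReal_ofReal (by positivity)]

lemma measureReal_expMeasure_prod_setOf_lt_swap (hr₁ : 0 < r₁) (hr₂ : 0 < r₂) {s c : ℝ}
    (hs : 0 ≤ s) (hc : 0 ≤ c) :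
    ((expMeasure r₁).prod (expMeasure r₂)).real {p | s * p.1 + c < p.2} =
      exp (-(r₂ * c)) * (r₁ / (r₁ + r₂ * s)) := by
  rw [← measureReal_expMeasure_prod_setOf_lt hr₂ hr₁ hs hc]
  have := isProbabilityMeasure_expMeasure hr₁
  have := isProbabilityMeasure_expMeasure hr₂
  have hS : MeasurableSet {p : ℝ × ℝ | s * p.2 + c < p.1} :=
    measurableSet_lt (by fun_prop) (by fun_prop)
  exact Measure.measurePreserving_swap.measureReal_preimage hS.nullMeasurableSet

lemma expMeasure_prod_restrict_Ioi_prod_Ioi (hr₁ : 0 < r₁) (hr₂ : 0 < r₂) {s t : ℝ}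
    (hs : 0 ≤ s) (ht : 0 ≤ t) :
    ((expMeasure r₁).prod (expMeasure r₂)).restrict (Ioi s ×ˢ Ioi t) =
      ENNReal.ofReal (exp (-(r₁ * s + r₂ * t))) •
        ((expMeasure r₁).prod (expMeasure r₂)).map (Prod.map (· + s) (· + t)) := by
  have := isProbabilityMeasure_expMeasure hr₁
  have := isProbabilityMeasure_expMeasure hr₂
  rw [← Measure.prod_restrict, expMeasure_restrict_Ioi hr₁ hs, expMeasure_restrict_Ioi hr₂ ht,
    Measure.prod_smul_left, Measure.prod_smul_right, smul_smul,
    Measure.map_prod_map _ _ (measurable_add_const s) (measurable_add_const t),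
    ← ENNReal.ofReal_mul (exp_pos _).le, ← exp_add, neg_add]

lemma measureReal_expMeasure_prod_cone (hr₁ : 0 < r₁) (hr₂ : 0 < r₂) {τ : ℝ} (hτ0 : 0 ≤ τ)
    (hτ1 : τ < 1) :
    ((expMeasure r₁).prod (expMeasure r₂)).real {p | τ * p.2 < p.1 ∧ τ * p.1 < p.2} =
      r₂ / (r₂ + r₁ * τ) + r₁ / (r₁ + r₂ * τ) - 1 := by
  have := isProbabilityMeasure_expMeasure hr₁
  have := isProbabilityMeasure_expMeasure hr₂
  have hA := measureReal_expMeasure_prod_setOf_lt hr₁ hr₂ hτ0 le_rfl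
  have hB := measureReal_expMeasure_prod_setOf_lt_swap hr₁ hr₂ hτ0 le_rfl
  simp only [add_zero, mul_zero, neg_zero, exp_zero, one_mul] at hA hB
  have hunion : ((expMeasure r₁).prod (expMeasure r₂)).real
      ({p | τ * p.2 < p.1} ∪ {p | τ * p.1 < p.2}) = 1 := by
    rw [measureReal_congr (ae_eq_univ.2 ?_), probReal_univ]
    refine measure_mono_null (fun p hp => ?_) (ae_iff.1 (ae_pos_expMeasure_prod hr₁ hr₂))
    simp only [compl_union, mem_inter_iff, mem_compl_iff, mem_ofPred_eq, not_lt] at hp ⊢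
    intro h1
    nlinarith
  have hsum := measureReal_union_add_inter (μ := (expMeasure r₁).prod (expMeasure r₂))
    (s := {p | τ * p.2 < p.1}) (t := {p | τ * p.1 < p.2})
    (measurableSet_lt (by fun_prop) (by fun_prop))
  rw [ofPred_and]
  linarith

lemma measureReal_expMeasure_prod_max_div_min_add_le (hr₁ : 0 < r₁) (hr₂ : 0 < r₂) {I τ : ℝ}
    (hI : 0 ≤ I) (hτ0 : 0 ≤ τ) (hτ1 : τ < 1) :
    ((expMeasure r₁).prod (expMeasure r₂)).real {p | max p.1 p.2 / (min p.1 p.2 + I) ≤ τ} =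
      1 - exp (-(r₁ * (τ * I))) * (r₂ / (r₂ + r₁ * τ))
        - exp (-(r₂ * (τ * I))) * (r₁ / (r₁ + r₂ * τ))
        + exp (-((r₁ + r₂) * (τ * I / (1 - τ)))) *
            (r₂ / (r₂ + r₁ * τ) + r₁ / (r₁ + r₂ * τ) - 1) := by
  have := isProbabilityMeasure_expMeasure hr₁
  have := isProbabilityMeasure_expMeasure hr₂
  set μ := (expMeasure r₁).prod (expMeasure r₂)
  set A : Set (ℝ × ℝ) := {p | τ * p.2 + τ * I < p.1}
  set B : Set (ℝ × ℝ) := {p | τ * p.1 + τ * I < p.2}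
  have hAm : MeasurableSet A := measurableSet_lt (by fun_prop) (by fun_prop)
  have hBm : MeasurableSet B := measurableSet_lt (by fun_prop) (by fun_prop)
  have hT : μ.real {p | max p.1 p.2 / (min p.1 p.2 + I) ≤ τ} = μ.real (A ∪ B)ᶜ := by
    refine measureReal_congr (Filter.eventuallyEq_set.2 ?_)
    filter_upwards [ae_pos_expMeasure_prod hr₁ hr₂] with p ⟨h1, h2⟩
    simp only [A, B, mem_ofPred_eq, mem_compl_iff, mem_union, not_or, not_lt]
    exact max_div_min_add_le_iff h1 h2 hI
  set k := τ * I / (1 - τ)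
  have hk : 0 ≤ k := div_nonneg (by positivity) (by linarith)
  have hkc : τ * I = k * (1 - τ) := (div_mul_cancel₀ _ (by linarith)).symm
  have hAB : μ.real (A ∩ B) =
      exp (-((r₁ + r₂) * k)) * μ.real {p | τ * p.2 < p.1 ∧ τ * p.1 < p.2} := by
    have hsub : A ∩ B ⊆ Ioi k ×ˢ Ioi k := by
      rintro p ⟨hpA, hpB⟩
      simp only [A, B, mem_ofPred_eq, hkc] at hpA hpB
      have h1 := pos_of_mul_lt_of_mul_lt (x := p.1 - k) (y := p.2 - k) hτ0 hτ1 (by linarith)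
        (by linarith)
      have h2 := pos_of_mul_lt_of_mul_lt (x := p.2 - k) (y := p.1 - k) hτ0 hτ1 (by linarith)
        (by linarith)
      exact ⟨sub_pos.1 h1, sub_pos.1 h2⟩
    rw [measureReal_def, ← Measure.restrict_eq_self _ hsub,
      expMeasure_prod_restrict_Ioi_prod_Ioi hr₁ hr₂ hk hk, Measure.smul_apply,
      Measure.map_apply (by fun_prop) (hAm.inter hBm), smul_eq_mul, ENNReal.toReal_mul,
      ENNReal.toReal_ofReal (exp_pos _).le, ← measureReal_def, ← add_mul]
    congr 2
    ext p
    simp only [A, B, mem_preimage, mem_inter_iff, mem_ofPred_eq, Prod.map_fst, Prod.map_snd, hkc]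
    constructor <;> rintro ⟨h1, h2⟩ <;> constructor <;> linarith
  have hsum := measureReal_union_add_inter (μ := μ) (s := A) hBm
  rw [measureReal_expMeasure_prod_setOf_lt hr₁ hr₂ hτ0 (by positivity),
    measureReal_expMeasure_prod_setOf_lt_swap hr₁ hr₂ hτ0 (by positivity), hAB,
    measureReal_expMeasure_prod_cone hr₁ hr₂ hτ0 hτ1] at hsum
  rw [hT, measureReal_compl (hAm.union hBm), probReal_univ]
  linarith

lemma map_const_mul_prod_eq_expMeasure_prod {Ω : Type*} [MeasurableSpace Ω] {P : Measure Ω}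
    [IsFiniteMeasure P] {X Y : Ω → ℝ} {a b : ℝ} (hr₁ : 0 < r₁) (hr₂ : 0 < r₂) (ha : 0 < a)
    (hb : 0 < b) (hXY : IndepFun X Y P) (hX : P.map X = expMeasure r₁)
    (hY : P.map Y = expMeasure r₂) :
    P.map (fun ω => (a * X ω, b * Y ω)) = (expMeasure (r₁ / a)).prod (expMeasure (r₂ / b)) := by
  rw [(indepFun_iff_map_prod_eq_prod_map_map
      ((aemeasurable_of_map_eq_expMeasure hr₁ hX).const_mul a)
      ((aemeasurable_of_map_eq_expMeasure hr₂ hY).const_mul b)).1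
    (hXY.comp (measurable_const_mul a) (measurable_const_mul b)),
    map_const_mul_eq_expMeasure hr₁ ha hX, map_const_mul_eq_expMeasure hr₂ hb hY]

end Product

end ProbabilityTheory

/-- CDF of T₂ = max{aX,bY}/(min{aX,bY}+I) for independent Exp(1) X, Y, for 0 ≤ τ < 1. -/
theorem exp_T2_cdf_lt_one
    {Ω : Type*} [MeasurableSpace Ω] (P : Measure Ω) [IsProbabilityMeasure P]
    (X Y : Ω → ℝ) (a b I τ : ℝ)
    (ha : 0 < a) (hb : 0 < b) (hI : 0 ≤ I) (hτ0 : 0 ≤ τ) (hτ1 : τ < 1)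
    (hXY : IndepFun X Y P)
    (hX : Measure.map X P = expMeasure 1)
    (hY : Measure.map Y P = expMeasure 1) :
    (P {ω | max (a * X ω) (b * Y ω) / (min (a * X ω) (b * Y ω) + I) ≤ τ}).toReal =
      1 - a / (a + b * τ) * Real.exp (-(τ * I / a))
        - b / (b + a * τ) * Real.exp (-(τ * I / b))
        + a * b * (1 + τ) * (1 - τ) / ((a + b * τ) * (b + a * τ)) *
            Real.exp (-((1 / a + 1 / b) * (τ * I / (1 - τ)))) := by
  have hXm := aemeasurable_of_map_eq_expMeasure one_pos hX
  have hYm := aemeasurable_of_map_eq_expMeasure one_pos hY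
  have hT : MeasurableSet {p : ℝ × ℝ | max p.1 p.2 / (min p.1 p.2 + I) ≤ τ} :=
    measurableSet_le (by fun_prop) measurable_const
  have hevent : P {ω | max (a * X ω) (b * Y ω) / (min (a * X ω) (b * Y ω) + I) ≤ τ} =
      P.map (fun ω => (a * X ω, b * Y ω)) {p | max p.1 p.2 / (min p.1 p.2 + I) ≤ τ} :=
    (Measure.map_apply_of_aemeasurable ((hXm.const_mul a).prodMk (hYm.const_mul b)) hT).symm
  rw [hevent, map_const_mul_prod_eq_expMeasure_prod one_pos one_pos ha hb hXY hX hY,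
    ← measureReal_def,
    measureReal_expMeasure_prod_max_div_min_add_le (by positivity) (by positivity) hI hτ0 hτ1]
  have e1 : 1 / b / (1 / b + 1 / a * τ) = a / (a + b * τ) := by field_simp
  have e2 : 1 / a / (1 / a + 1 / b * τ) = b / (b + a * τ) := by field_simp
  have e3 : a / (a + b * τ) + b / (b + a * τ) - 1 =
      a * b * (1 + τ) * (1 - τ) / ((a + b * τ) * (b + a * τ)) := by
    field_simp
    ring
  rw [e1, e2, e3, one_div_mul_eq_div, one_div_mul_eq_div]
  ring
end

section
/- For every positive integer m and all a, b > 0: Σ_{i=0}^{m−1} C(m+i−1, i) · (aᵐbⁱ + aⁱbᵐ)/(a+b)^{m+i} = 1. -/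
open Finset

/-!
Put `x = a / (a + b)` and `y = b / (a + b)`, so `x + y = 1`. The sum is
`x ^ m * A (y) + y ^ m * A (x)`, where `A` is the truncation at degree `m - 1` of the negative
binomial series `(1 - y) ^ (-m) = ∑ C(m - 1 + i, i) y ^ i`; this is the problem of points, the
probability that one of two players is the first to win `m` rounds. Pascal's rule gives
`x * A_{n+1}(y) = A_n(y) + C(2n+1, n+1) y ^ (n+1) (x - y)`, so going from `m` to `m + 1` changes
the two summands by opposite amounts and the sum stays `1`.
-/

theorem choose_two_mul_add_two (n : ℕ) :
    (2 * n + 2).choose (n + 1) = 2 * (2 * n + 1).choose (n + 1) := by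
  rw [Nat.choose_succ_succ, ← Nat.choose_symm_half]
  ring

section

variable {R : Type*} [CommRing R]

def negBinomSum (n : ℕ) (y : R) : R :=
  ∑ i ∈ range (n + 1), ((n + i).choose i : R) * y ^ i

theorem mul_negBinomSum_succ {x y : R} (h : x + y = 1) (n : ℕ) :
    x * negBinomSum (n + 1) y
      = negBinomSum n y + ((2 * n + 1).choose (n + 1) : R) * y ^ (n + 1) * (x - y) := by
  have pascal : negBinomSum (n + 1) y
      = y * ∑ i ∈ range (n + 1), ((n + 1 + i).choose i : R) * y ^ i
        + ∑ i ∈ range (n + 1), ((n + (i + 1)).choose (i + 1) : R) * y ^ (i + 1) + 1 := by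
    rw [negBinomSum, sum_range_succ', mul_sum, ← sum_add_distrib]
    congr 1
    · refine sum_congr rfl fun i _ => ?_
      rw [show n + 1 + (i + 1) = n + 1 + i + 1 by ring, Nat.choose_succ_succ',
        show n + 1 + i = n + (i + 1) by ring]
      push_cast
      ring
    · simp
  have last : negBinomSum (n + 1) y
      = ∑ i ∈ range (n + 1), ((n + 1 + i).choose i : R) * y ^ i
        + ((2 * n + 2).choose (n + 1) : R) * y ^ (n + 1) := by
    rw [negBinomSum, sum_range_succ, show n + 1 + (n + 1) = 2 * n + 2 by ring]
  have shift : ∑ i ∈ range (n + 1), ((n + (i + 1)).choose (i + 1) : R) * y ^ (i + 1) + 1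
      = negBinomSum n y + ((2 * n + 1).choose (n + 1) : R) * y ^ (n + 1) := by
    have := sum_range_succ' (fun i => ((n + i).choose i : R) * y ^ i) (n + 1)
    rw [sum_range_succ, show n + (n + 1) = 2 * n + 1 by ring] at this
    simp only [negBinomSum]
    simpa using this.symm
  have central : ((2 * n + 2).choose (n + 1) : R) = 2 * ((2 * n + 1).choose (n + 1) : R) := by
    rw [choose_two_mul_add_two, Nat.cast_mul, Nat.cast_ofNat]
  linear_combination pascal - y * last + shift - y * y ^ (n + 1) * central
    + (negBinomSum (n + 1) y - ((2 * n + 1).choose (n + 1) : R) * y ^ (n + 1)) * h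

theorem pow_mul_negBinomSum_add_pow_mul_negBinomSum {x y : R} (h : x + y = 1) (n : ℕ) :
    x ^ (n + 1) * negBinomSum n y + y ^ (n + 1) * negBinomSum n x = 1 := by
  induction n with
  | zero => simpa [negBinomSum] using h
  | succ n ih =>
    have hy := mul_negBinomSum_succ h n
    have hx := mul_negBinomSum_succ ((add_comm y x).trans h) n
    linear_combination x ^ (n + 1) * hy + y ^ (n + 1) * hx + ih

end

/-- Σ_{i=0}^{m−1} C(m+i−1, i)·(aᵐbⁱ + aⁱbᵐ)/(a+b)^{m+i} = 1. -/
theorem sum_choose_ratio_eq_one (m : ℕ) (hm : 1 ≤ m) (a b : ℝ) (ha : 0 < a) (hb : 0 < b) :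
    ∑ i ∈ Finset.range m,
      ((m + i - 1).choose i : ℝ) * (a ^ m * b ^ i + a ^ i * b ^ m) / (a + b) ^ (m + i)
      = 1 := by
  obtain ⟨n, rfl⟩ : ∃ n, m = n + 1 := ⟨m - 1, by omega⟩
  have hab : a + b ≠ 0 := by positivity
  have hxy : a / (a + b) + b / (a + b) = 1 := by field_simp
  rw [← pow_mul_negBinomSum_add_pow_mul_negBinomSum hxy n, negBinomSum, negBinomSum,
    mul_sum, mul_sum, ← sum_add_distrib]
  refine sum_congr rfl fun i _ => ?_
  rw [show n + 1 + i - 1 = n + i by omega]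
  simp only [div_pow]
  field_simp
  ring
end
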